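/- arXiv:2406.13341 — 2 statements merged into one kernel-verified Lean document; each statement's English description precedes it below -/
import Mathlib

section
/- Let U be a sequentially spanning subset of the vertex set of the n-dimensional Hamming graph G = □_{i=1}^n K_k. Then there exists a projection H of G with dim(H) = 2(|U| − 1) such that the 2-neighbour bootstrap closure of U equals V(H). -/
open scoped Classical

section Defs

variable {V : Type*}

/-- One round of 2-neighbour bootstrap percolation: a healthy vertex becomes infected
if it has at least two infected neighbours. -/
def bootStep (G : SimpleGraph V) (A : Set V) : Set V :=
  A ∪ {v | ∃ u w, u ≠ w ∧ G.Adj v u ∧ G.Adj v w ∧ u ∈ A ∧ w ∈ A}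

/-- Iterates of the bootstrap process. -/
def bootIter (G : SimpleGraph V) (A : Set V) : ℕ → Set V
  | 0 => A
  | j + 1 => bootStep G (bootIter G A j)

/-- The 2-neighbour bootstrap closure `[A]` of a set `A` of initially infected vertices. -/
def bootClosure (G : SimpleGraph V) (A : Set V) : Set V :=
  ⋃ j, bootIter G A j

/-- Graph distance between two sets of vertices. -/
noncomputable def setDist (G : SimpleGraph V) (X Y : Set V) : ℕ :=
  sInf {d | ∃ u ∈ X, ∃ v ∈ Y, G.dist u v = d}

/-- A sequence of `m` vertices `v 0, …, v (m-1)` (a "sequentially spanning sequence of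
length `m-1`") is sequentially spanning if each vertex lies at distance exactly two from the
bootstrap closure of its predecessors. -/
def SeqSpanSeq (G : SimpleGraph V) (m : ℕ) (v : Fin m → V) : Prop :=
  ∀ i : Fin m, 0 < (i : ℕ) →
    setDist G (bootClosure G (v '' {j | (j : ℕ) < (i : ℕ)})) {v i} = 2

/-- A set `U` is sequentially spanning if its vertices admit an ordering which is a
sequentially spanning sequence. -/
def SeqSpanSet (G : SimpleGraph V) (U : Set V) : Prop :=
  ∃ (m : ℕ) (v : Fin (m + 1) → V), Function.Injective v ∧ Set.range v = U ∧
    SeqSpanSeq G (m + 1) v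

/-- A family `F` of vertex sets is disjointly internally spanned by `A` if there are
pairwise disjoint subsets of `A` internally spanning each member of `F`. -/
def DisjIntSpanned (G : SimpleGraph V) (A : Set V) (F : Set (Set V)) : Prop :=
  ∃ B : Set V → Set V,
    (∀ U ∈ F, B U ⊆ A ∧ bootClosure G (B U ∩ U) = U) ∧
    (∀ U ∈ F, ∀ W ∈ F, U ≠ W → Disjoint (B U) (B W))

/-- The probability that the `p`-random subset of a finite vertex set satisfies the event `E`. -/
noncomputable def probEvent [Fintype V] [DecidableEq V] (p : ℝ) (E : Set V → Prop) : ℝ :=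
  ∑ A : Finset V, if E ↑A then p ^ A.card * (1 - p) ^ (Fintype.card V - A.card) else 0

end Defs

/-- The `n`-dimensional Hamming graph on `[k]^n`: two vertices are adjacent iff they
differ in exactly one coordinate. -/
def hamming (n k : ℕ) : SimpleGraph (Fin n → Fin k) where
  Adj v w := (Finset.univ.filter fun i => v i ≠ w i).card = 1
  symm := by
    constructor
    intro v w h
    have e : (Finset.univ.filter fun i => w i ≠ v i) =
        Finset.univ.filter fun i => v i ≠ w i :=
      Finset.filter_congr fun i _ => ne_comm
    rw [e]; exact h
  loopless := by
    constructor
    intro v h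
    simp at h

/-- The vertex set of the projection of the Hamming graph specified by `S`:
coordinates with `S i = some a` are fixed to `a`, coordinates with `S i = none` are free. -/
def projSet {n k : ℕ} (S : Fin n → Option (Fin k)) : Set (Fin n → Fin k) :=
  {v | ∀ i : Fin n, ∀ a : Fin k, S i = some a → v i = a}

/-- The dimension of a projection: the number of free coordinates. -/
def projDim {n k : ℕ} (S : Fin n → Option (Fin k)) : ℕ :=
  (Finset.univ.filter fun i => S i = none).card

/-- Probability that the Hamming graph percolates from the `p`-random subset. -/
noncomputable def percProb (n k : ℕ) (p : ℝ) : ℝ :=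
  probEvent p (fun A => bootClosure (hamming n k) A = Set.univ)

/-- Probability that the projection `S` is internally spanned by the `p`-random subset. -/
noncomputable def intSpanProb (n k : ℕ) (p : ℝ) (S : Fin n → Option (Fin k)) : ℝ :=
  probEvent p (fun A => bootClosure (hamming n k) (A ∩ projSet S) = projSet S)

/-- `p_* = n^{-2} k^{-2√n + 1}`. -/
noncomputable def pStar (n k : ℕ) : ℝ :=
  (n : ℝ) ^ (-2 : ℝ) * (k : ℝ) ^ (-2 * Real.sqrt n + 1)

/-- The critical probability for 2-neighbour bootstrap percolation on the Hamming graph. -/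
noncomputable def pc (n k : ℕ) : ℝ :=
  sInf {p : ℝ | 0 < p ∧ p < 1 ∧ 1 / 2 ≤ percProb n k p}

/-- A canonical projection of dimension `m` (the first `m` coordinates are free,
the remaining ones are fixed to `x`). -/
def canonProj (n k m : ℕ) (x : Fin k) : Fin n → Option (Fin k) :=
  fun i => if (i : ℕ) < m then none else some x

/-- The set `I_{H,t}` of admissible indices `(ℓ, i, j, d)` for a projection of dimension `m`
and threshold `t`. -/
def indexSet (m t : ℕ) : Finset (ℕ × ℕ × ℕ × ℕ) :=
  ((Finset.range (m + 1)) ×ˢ (Finset.range (m + 1)) ×ˢ (Finset.range (m + 1)) ×ˢ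
      (Finset.range 3)).filter
    fun q => t ≤ q.1 ∧ q.1 ≤ min (q.2.1 + q.2.2.1 + q.2.2.2) m ∧
      q.2.2.1 ≤ q.2.1 ∧ q.2.1 < t ∧ q.2.1 + q.2.2.2 < q.1

/-- `U_{H,t}(ℓ,i,j,d)`: the number of candidate quadruples `(H_ℓ, {H_i, H_j}, d)` inside the
projection `SH` at threshold `t` with dimensions `ℓ, i, j` and distance `d`; the pair
`{H_i, H_j}` is unordered. -/
noncomputable def candCountIn (n k : ℕ) (SH : Fin n → Option (Fin k)) (t : ℕ)
    (q : ℕ × ℕ × ℕ × ℕ) : ℕ :=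
  Nat.card {c : (Fin n → Option (Fin k)) × Sym2 (Fin n → Option (Fin k)) //
    t ≤ q.1 ∧ q.2.2.1 ≤ q.2.1 ∧ q.2.1 < t ∧ q.2.2.2 ≤ 2 ∧
    projDim c.1 = q.1 ∧ projSet c.1 ⊆ projSet SH ∧
    ∃ a b, c.2 = s(a, b) ∧ projDim a = q.2.1 ∧ projDim b = q.2.2.1 ∧
      setDist (hamming n k) (projSet a) (projSet b) = q.2.2.2 ∧
      bootClosure (hamming n k) (projSet a ∪ projSet b) = projSet c.1}

/-- `U_{G,t}(ℓ,i,j,d)`: the number of candidate quadruples in the whole Hamming graph. -/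
noncomputable def candCount (n k t : ℕ) (q : ℕ × ℕ × ℕ × ℕ) : ℕ :=
  candCountIn n k (fun _ => none) t q

/-- The constants `Ψ_m`. -/
noncomputable def Psi (n k : ℕ) : ℕ → ℝ
  | 0 => 1
  | m + 1 =>
    if m + 1 ≤ 14 then (1 / 2) * (9 * Real.sqrt 2 / 10) ^ (m + 1)
    else Psi n k m * (1 + (k : ℝ) ^ (-(((m : ℝ) + 1) - 11) / 2)) * (1 + 4 / (n : ℝ))

/-- The function `Φ(m) = Ψ_m p^{m/2+1} m! 2^{-m/2} (k-1)^m k^{(m²+2m)/4}`. -/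
noncomputable def Phi (n k : ℕ) (p : ℝ) (m : ℕ) : ℝ :=
  Psi n k m * p ^ ((m : ℝ) / 2 + 1) * (Nat.factorial m : ℝ) * (2 : ℝ) ^ (-(m : ℝ) / 2) *
    ((k : ℝ) - 1) ^ m * (k : ℝ) ^ (((m : ℝ) ^ 2 + 2 * (m : ℝ)) / 4)

/-- `|S_{m-1}|`: the number of sequentially spanning sequences with `m` vertices
(i.e. of length `m - 1`) in the Hamming graph. -/
noncomputable def seqCount (n k m : ℕ) : ℕ :=
  Nat.card {v : Fin m → (Fin n → Fin k) // SeqSpanSeq (hamming n k) m v}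

/-- `|P_{ℓ,i}|`: the number of unordered pairs of sequentially spanning sequences of
length `ℓ` whose vertex sets intersect in exactly `i` vertices. -/
noncomputable def pairCount (n k ℓ i : ℕ) : ℕ :=
  Nat.card {q : Sym2 (Fin (ℓ + 1) → (Fin n → Fin k)) //
    ∃ a b, q = s(a, b) ∧ SeqSpanSeq (hamming n k) (ℓ + 1) a ∧
      SeqSpanSeq (hamming n k) (ℓ + 1) b ∧ (Set.range a ∩ Set.range b).ncard = i}

/-!
Induct along the spanning order: the closure of the first `t + 1` vertices is a projection
of dimension `2t`. A vertex `v` at distance two from a projection `P` disagrees with the fixed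
values of `P` in exactly two coordinates `i₁, i₂`. The vertex `u` half-way from `v` to `P` has
two infected neighbours, so the whole line through `u` in direction `i₂` gets infected, and from
that line and `P` the projection `P` with `i₂` freed; the line through `v` in direction `i₁`
then frees `i₁`. Conversely projections are closed under the process, so nothing else is
infected.
-/

open Function

section Bootstrap

variable {V : Type*} {G : SimpleGraph V}

lemma subset_bootStep (A : Set V) : A ⊆ bootStep G A := Set.subset_union_left

lemma bootStep_mono {A B : Set V} (h : A ⊆ B) : bootStep G A ⊆ bootStep G B := by
  rintro x (hx | ⟨u, w, huw, hxu, hxw, hu, hw⟩)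
  · exact Or.inl (h hx)
  · exact Or.inr ⟨u, w, huw, hxu, hxw, h hu, h hw⟩

lemma bootIter_monotone (A : Set V) : Monotone (bootIter G A) :=
  monotone_nat_of_le_succ fun _ => subset_bootStep _

lemma subset_bootClosure (A : Set V) : A ⊆ bootClosure G A :=
  Set.subset_iUnion (bootIter G A) 0

lemma mem_of_adj_of_adj {C : Set V} (hC : bootStep G C ⊆ C) {x u w : V} (huw : u ≠ w)
    (hxu : G.Adj x u) (hxw : G.Adj x w) (hu : u ∈ C) (hw : w ∈ C) : x ∈ C :=
  hC (Or.inr ⟨u, w, huw, hxu, hxw, hu, hw⟩)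

lemma bootStep_bootClosure_subset (A : Set V) :
    bootStep G (bootClosure G A) ⊆ bootClosure G A := by
  rintro x (hx | ⟨u, w, huw, hxu, hxw, hu, hw⟩)
  · exact hx
  · obtain ⟨i, hi⟩ := Set.mem_iUnion.mp hu
    obtain ⟨j, hj⟩ := Set.mem_iUnion.mp hw
    exact Set.mem_iUnion.mpr ⟨max i j + 1, Or.inr ⟨u, w, huw, hxu, hxw,
      bootIter_monotone A (le_max_left i j) hi, bootIter_monotone A (le_max_right i j) hj⟩⟩

lemma bootClosure_subset_of_bootStep_subset {A C : Set V} (hAC : A ⊆ C)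
    (hC : bootStep G C ⊆ C) : bootClosure G A ⊆ C := by
  refine Set.iUnion_subset fun j => ?_
  induction j with
  | zero => exact hAC
  | succ j ih => exact (bootStep_mono ih).trans hC

lemma bootClosure_mono {A B : Set V} (h : A ⊆ B) : bootClosure G A ⊆ bootClosure G B :=
  bootClosure_subset_of_bootStep_subset (h.trans (subset_bootClosure B))
    (bootStep_bootClosure_subset B)

lemma bootClosure_bootClosure_union (A B : Set V) :
    bootClosure G (bootClosure G A ∪ B) = bootClosure G (A ∪ B) := by
  refine (bootClosure_subset_of_bootStep_subset (Set.union_subset ?_ ?_)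
    (bootStep_bootClosure_subset _)).antisymm
    (bootClosure_mono (Set.union_subset_union_left B (subset_bootClosure A)))
  · exact bootClosure_mono Set.subset_union_left
  · exact Set.subset_union_right.trans (subset_bootClosure _)

lemma bootClosure_singleton (v : V) : bootClosure G {v} = {v} := by
  refine (bootClosure_subset_of_bootStep_subset subset_rfl ?_).antisymm (subset_bootClosure _)
  rintro x (hx | ⟨u, w, huw, -, -, rfl, rfl⟩)
  · exact hx
  · exact absurd rfl huw

end Bootstrap

section HammingDist

variable {ι : Type*} [Fintype ι] [DecidableEq ι] {β : ι → Type*} [∀ i, DecidableEq (β i)]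

lemma hammingDist_update_self {x : ∀ i, β i} {i : ι} {a : β i} (h : a ≠ x i) :
    hammingDist x (update x i a) = 1 := by
  rw [hammingDist, Finset.card_eq_one]
  refine ⟨i, Finset.ext fun j => ?_⟩
  rcases eq_or_ne j i with rfl | hj
  · simp [h.symm]
  · simp [hj]

lemma hammingDist_update_add_one {x y : ∀ i, β i} {i : ι} (h : x i ≠ y i) :
    hammingDist (update x i (y i)) y + 1 = hammingDist x y := by
  have : Finset.univ.filter (fun j => update x i (y i) j ≠ y j) =
      (Finset.univ.filter fun j => x j ≠ y j).erase i := by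
    ext j
    rcases eq_or_ne j i with rfl | hj
    · simp
    · simp [hj]
  rw [hammingDist, hammingDist, this, Finset.card_erase_add_one (by simpa using h)]

lemma eq_update_of_hammingDist_eq_one {x y : ∀ i, β i} {i : ι} (h : hammingDist x y = 1)
    (hi : x i ≠ y i) : y = update x i (y i) := by
  funext j
  rcases eq_or_ne j i with rfl | hj
  · simp
  · rw [update_of_ne hj]
    by_contra hxy
    exact hj (Finset.card_le_one.mp h.le j (by simpa using Ne.symm hxy) i (by simpa using hi))

end HammingDist

section Hamming

variable {n k : ℕ}

lemma hamming_adj_iff {v w : Fin n → Fin k} :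
    (hamming n k).Adj v w ↔ hammingDist v w = 1 := Iff.rfl

lemma hamming_adj_update {x : Fin n → Fin k} {i : Fin n} {a : Fin k} (h : a ≠ x i) :
    (hamming n k).Adj x (update x i a) :=
  hamming_adj_iff.mpr (hammingDist_update_self h)

lemma hamming_adj_update_update {x : Fin n → Fin k} {i : Fin n} {a b : Fin k} (h : a ≠ b) :
    (hamming n k).Adj (update x i a) (update x i b) := by
  simpa using hamming_adj_update (x := update x i a) (i := i) (a := b) (by simpa using h.symm)

lemma hammingDist_le_length {u w : Fin n → Fin k} (p : (hamming n k).Walk u w) :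
    hammingDist u w ≤ p.length := by
  induction p with
  | nil => simp
  | cons hadj p ih =>
    rw [SimpleGraph.Walk.length_cons]
    exact (hammingDist_triangle _ _ _).trans (by rw [hamming_adj_iff.mp hadj]; omega)

lemma exists_walk_length_eq_hammingDist (u w : Fin n → Fin k) :
    ∃ p : (hamming n k).Walk u w, p.length = hammingDist u w := by
  induction h : hammingDist u w generalizing u with
  | zero =>
    obtain rfl := hammingDist_eq_zero.mp h
    exact ⟨.nil, rfl⟩
  | succ d ih =>
    obtain ⟨i, hi⟩ := Finset.card_pos.mp (h ▸ d.succ_pos : 0 < hammingDist u w)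
    have hi : u i ≠ w i := (Finset.mem_filter.mp hi).2
    obtain ⟨p, hp⟩ := ih (update u i (w i)) (by have := hammingDist_update_add_one hi; omega)
    exact ⟨.cons (hamming_adj_update hi.symm) p, by simp [hp]⟩

lemma hamming_dist (u w : Fin n → Fin k) : (hamming n k).dist u w = hammingDist u w := by
  obtain ⟨p, hp⟩ := exists_walk_length_eq_hammingDist u w
  refine le_antisymm (hp ▸ SimpleGraph.dist_le p) ?_
  obtain ⟨q, hq⟩ := p.reachable.exists_walk_length_eq_dist
  exact hq ▸ hammingDist_le_length q

end Hamming

section Projection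

variable {n k : ℕ}

def projMismatch (S : Fin n → Option (Fin k)) (v : Fin n → Fin k) : Finset (Fin n) :=
  Finset.univ.filter fun i => ∃ a, S i = some a ∧ v i ≠ a

lemma mem_projMismatch {S : Fin n → Option (Fin k)} {v : Fin n → Fin k} {i : Fin n} :
    i ∈ projMismatch S v ↔ ∃ a, S i = some a ∧ v i ≠ a := by
  simp [projMismatch]

lemma projMismatch_eq_empty {S : Fin n → Option (Fin k)} {v : Fin n → Fin k} :
    projMismatch S v = ∅ ↔ v ∈ projSet S := by
  simp [Finset.eq_empty_iff_forall_notMem, mem_projMismatch, projSet]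

lemma projMismatch_update_none (S : Fin n → Option (Fin k)) (v : Fin n → Fin k) (i : Fin n) :
    projMismatch (update S i none) v = (projMismatch S v).erase i := by
  ext j
  rcases eq_or_ne j i with rfl | hj
  · simp [mem_projMismatch]
  · simp [mem_projMismatch, hj]

lemma projSet_some (v : Fin n → Fin k) : projSet (fun i => some (v i)) = {v} := by
  ext w
  simp [projSet, funext_iff, eq_comm]

lemma projSet_subset_update_none (S : Fin n → Option (Fin k)) (i : Fin n) :
    projSet S ⊆ projSet (update S i none) := by
  intro w hw j a hj
  rcases eq_or_ne j i with rfl | hji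
  · simp at hj
  · exact hw j a (by rwa [update_of_ne hji] at hj)

lemma update_mem_projSet {S : Fin n → Option (Fin k)} {i : Fin n} {a : Fin k}
    (hS : S i = some a) {w : Fin n → Fin k} (hw : w ∈ projSet (update S i none)) :
    update w i a ∈ projSet S := by
  intro j b hj
  rcases eq_or_ne j i with rfl | hji
  · simp_all
  · rw [update_of_ne hji]
    exact hw j b (by rwa [update_of_ne hji])

lemma projDim_update_none {S : Fin n → Option (Fin k)} {i : Fin n} {a : Fin k}
    (hS : S i = some a) : projDim (update S i none) = projDim S + 1 := by
  have : Finset.univ.filter (fun j => update S i none j = none) =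
      insert i (Finset.univ.filter fun j => S j = none) := by
    ext j
    rcases eq_or_ne j i with rfl | hj
    · simp
    · simp [hj]
  rw [projDim, projDim, this, Finset.card_insert_of_notMem (by simp [hS])]

lemma setDist_projSet_singleton (S : Fin n → Option (Fin k)) (v : Fin n → Fin k) :
    setDist (hamming n k) (projSet S) {v} = (projMismatch S v).card := by
  have hlower : ∀ u ∈ projSet S, (projMismatch S v).card ≤ hammingDist u v := by
    refine fun u hu => Finset.card_le_card fun i hi => ?_
    obtain ⟨a, hSa, hva⟩ := mem_projMismatch.mp hi
    simpa [hu i a hSa] using Ne.symm hva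
  set p : Fin n → Fin k := fun i => (S i).getD (v i)
  have hp : p ∈ projSet S := fun i a h => by simp [p, h]
  have hpv : hammingDist p v = (projMismatch S v).card := by
    refine (Finset.card_le_card fun i hi => ?_).antisymm (hlower p hp)
    cases hSi : S i with
    | none => simp [p, hSi] at hi
    | some a => exact mem_projMismatch.mpr ⟨a, hSi, by simpa [p, hSi, eq_comm] using hi⟩
  refine le_antisymm (Nat.sInf_le ⟨p, hp, v, rfl, by rw [hamming_dist, hpv]⟩)
    (le_csInf ⟨_, p, hp, v, rfl, rfl⟩ ?_)
  rintro _ ⟨u, hu, w, hw, rfl⟩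
  rw [Set.mem_singleton_iff.mp hw, hamming_dist]
  exact hlower u hu

lemma projSet_bootStep_subset (S : Fin n → Option (Fin k)) :
    bootStep (hamming n k) (projSet S) ⊆ projSet S := by
  rintro w (hw | ⟨u₁, u₂, hu, hwu₁, hwu₂, hu₁, hu₂⟩)
  · exact hw
  by_contra hw
  obtain ⟨j, a, hSj, hwj⟩ : ∃ j a, S j = some a ∧ w j ≠ a := by
    simpa [projSet] using hw
  -- a neighbour of `w` inside the projection can only differ from `w` at `j`
  have key : ∀ u ∈ projSet S, (hamming n k).Adj w u → u = update w j a := fun u hu hwu => by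
    rw [eq_update_of_hammingDist_eq_one hwu (by rwa [hu j a hSj]), hu j a hSj]
  exact hu ((key u₁ hu₁ hwu₁).trans (key u₂ hu₂ hwu₂).symm)

end Projection

section Spanning

variable {n k : ℕ} {C : Set (Fin n → Fin k)}

lemma update_mem_of_bootStep_subset (hC : bootStep (hamming n k) C ⊆ C)
    {x : Fin n → Fin k} {i : Fin n} {a : Fin k} (hx : x ∈ C) (hxa : update x i a ∈ C)
    (ha : a ≠ x i) (c : Fin k) : update x i c ∈ C := by
  rcases eq_or_ne c (x i) with rfl | hcx
  · rwa [update_eq_self]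
  rcases eq_or_ne c a with rfl | hca
  · exact hxa
  exact mem_of_adj_of_adj hC (hamming_adj_update ha).ne
    (by simpa using (hamming_adj_update (x := x) hcx).symm) (hamming_adj_update_update hca) hx hxa

lemma projSet_update_none_subset (hC : bootStep (hamming n k) C ⊆ C)
    {S : Fin n → Option (Fin k)} {i : Fin n} {a : Fin k} (hS : S i = some a)
    (hSC : projSet S ⊆ C) {x : Fin n → Fin k} (hx : x ∈ C) (hxi : x i ≠ a)
    (hxS : x ∈ projSet (update S i none)) : projSet (update S i none) ⊆ C := by
  have hline : ∀ c, update x i c ∈ C :=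
    update_mem_of_bootStep_subset hC hx (hSC (update_mem_projSet hS hxS)) hxi.symm
  suffices ∀ T : Finset (Fin n), ∀ w ∈ projSet (update S i none),
      (∀ j ∉ T, j ≠ i → w j = x j) → w ∈ C from
    fun w hw => this Finset.univ w hw (by simp)
  intro T
  induction T using Finset.induction with
  | empty =>
    intro w _ hwx
    convert hline (w i)
    funext j
    rcases eq_or_ne j i with rfl | hji
    · simp
    · rw [update_of_ne hji, hwx j (Finset.notMem_empty j) hji]
  | @insert j T _ ih =>
    intro w hw hwx
    by_cases hj : j = i ∨ w j = x j
    · refine ih w hw fun l hl hli => ?_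
      rcases eq_or_ne l j with rfl | hlj
      · exact hj.resolve_left hli
      · exact hwx l (by simp [hl, hlj]) hli
    rw [not_or] at hj
    rcases eq_or_ne (w i) a with hwi | hwi
    · exact hSC (by simpa [← hwi] using update_mem_projSet hS hw)
    -- `w` has two infected neighbours: one step towards `x` in coordinate `j`, and its
    -- neighbour in `projSet S` in coordinate `i`
    have hw' : update w j (x j) ∈ C := by
      refine ih _ (fun l b hl => ?_) fun l hl hli => ?_
      · rcases eq_or_ne l j with rfl | hlj
        · simpa using hxS l b hl
        · exact (update_of_ne hlj _ _).trans (hw l b hl)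
      · rcases eq_or_ne l j with rfl | hlj
        · simp
        · rw [update_of_ne hlj]
          exact hwx l (by simp [hl, hlj]) hli
    refine mem_of_adj_of_adj hC (fun h => hj.2 ?_) (hamming_adj_update (Ne.symm hj.2))
      (hamming_adj_update (Ne.symm hwi)) hw' (hSC (update_mem_projSet hS hw))
    simpa [hj.1] using (congrFun h j).symm

lemma bootClosure_projSet_union_singleton {S : Fin n → Option (Fin k)} {v : Fin n → Fin k}
    {i₁ i₂ : Fin n} {a₁ a₂ : Fin k} (hi : i₁ ≠ i₂) (hS₁ : S i₁ = some a₁)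
    (hS₂ : S i₂ = some a₂) (hv₁ : v i₁ ≠ a₁) (hv₂ : v i₂ ≠ a₂)
    (hv : v ∈ projSet (update (update S i₂ none) i₁ none)) :
    bootClosure (hamming n k) (projSet S ∪ {v}) =
      projSet (update (update S i₂ none) i₁ none) := by
  set C := bootClosure (hamming n k) (projSet S ∪ {v})
  have hC : bootStep (hamming n k) C ⊆ C := bootStep_bootClosure_subset _
  have hSC : projSet S ⊆ C := Set.subset_union_left.trans (subset_bootClosure _)
  have hvC : v ∈ C := subset_bootClosure _ (Or.inr rfl)
  have hS₂₁ : update S i₂ none i₁ = some a₁ := by rwa [update_of_ne hi]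
  -- the vertex half-way from `v` to `projSet S`
  set u := update v i₁ a₁
  have hu : u ∈ projSet (update S i₂ none) := update_mem_projSet hS₂₁ hv
  have hui : u i₂ = v i₂ := update_of_ne hi.symm _ _
  have huC : u ∈ C := by
    refine mem_of_adj_of_adj hC (fun h => hv₁ ?_) (hamming_adj_update hv₁.symm).symm
      (hamming_adj_update (hui ▸ hv₂.symm)) hvC (hSC (update_mem_projSet hS₂ hu))
    rw [h, update_of_ne hi]
    exact update_self _ _ _
  have hfree₂ := projSet_update_none_subset hC hS₂ hSC huC (hui ▸ hv₂) hu
  refine (bootClosure_subset_of_bootStep_subset (Set.union_subset ?_ ?_)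
    (projSet_bootStep_subset _)).antisymm
    (projSet_update_none_subset hC hS₂₁ hfree₂ hvC hv₁ hv)
  · exact (projSet_subset_update_none S i₂).trans (projSet_subset_update_none _ i₁)
  · exact Set.singleton_subset_iff.mpr hv

lemma exists_bootClosure_union_singleton_eq_projSet {A : Set (Fin n → Fin k)}
    {S : Fin n → Option (Fin k)} (hA : bootClosure (hamming n k) A = projSet S)
    {v : Fin n → Fin k} (hv : setDist (hamming n k) (projSet S) {v} = 2) :
    ∃ S', projDim S' = projDim S + 2 ∧ bootClosure (hamming n k) (A ∪ {v}) = projSet S' := by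
  rw [setDist_projSet_singleton] at hv
  obtain ⟨i₁, i₂, hi, hmis⟩ := Finset.card_eq_two.mp hv
  obtain ⟨a₁, hS₁, hv₁⟩ :=
    mem_projMismatch.mp (hmis ▸ by simp : i₁ ∈ projMismatch S v)
  obtain ⟨a₂, hS₂, hv₂⟩ :=
    mem_projMismatch.mp (hmis ▸ by simp : i₂ ∈ projMismatch S v)
  have hvS : v ∈ projSet (update (update S i₂ none) i₁ none) := by
    rw [← projMismatch_eq_empty, projMismatch_update_none, projMismatch_update_none, hmis]
    ext j
    simp only [Finset.mem_erase, Finset.mem_insert, Finset.mem_singleton, Finset.notMem_empty,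
      iff_false]
    tauto
  refine ⟨update (update S i₂ none) i₁ none, ?_, ?_⟩
  · rw [projDim_update_none (a := a₁) (by rwa [update_of_ne hi]), projDim_update_none hS₂]
  · rw [← bootClosure_bootClosure_union, hA]
    exact bootClosure_projSet_union_singleton hi hS₁ hS₂ hv₁ hv₂ hvS

lemma SeqSpanSeq.exists_bootClosure_prefix_eq_projSet {m : ℕ}
    {v : Fin (m + 1) → Fin n → Fin k} (hv : SeqSpanSeq (hamming n k) (m + 1) v)
    {t : ℕ} (ht : t ≤ m) :
    ∃ S, projDim S = 2 * t ∧
      bootClosure (hamming n k) (v '' {j | (j : ℕ) < t + 1}) = projSet S := by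
  induction t with
  | zero =>
    refine ⟨fun i => some (v 0 i), by simp [projDim], ?_⟩
    have : {j : Fin (m + 1) | (j : ℕ) < 0 + 1} = {0} := by
      ext j
      simp only [Set.mem_ofPred_eq, Set.mem_singleton_iff, Fin.ext_iff, Fin.val_zero]
      omega
    rw [this, Set.image_singleton, bootClosure_singleton, projSet_some]
  | succ t ih =>
    obtain ⟨S, hdim, hS⟩ := ih (by omega)
    have hdist := hv ⟨t + 1, by omega⟩ t.succ_pos
    rw [hS] at hdist
    obtain ⟨S', hdim', hS'⟩ := exists_bootClosure_union_singleton_eq_projSet hS hdist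
    refine ⟨S', by rw [hdim', hdim]; ring, ?_⟩
    have : {j : Fin (m + 1) | (j : ℕ) < t + 1 + 1} =
        {j : Fin (m + 1) | (j : ℕ) < t + 1} ∪ {⟨t + 1, by omega⟩} := by
      ext j
      simp only [Set.mem_ofPred_eq, Set.mem_union, Set.mem_singleton_iff, Fin.ext_iff]
      omega
    rw [this, Set.image_union, Set.image_singleton, hS']

end Spanning

theorem stmt5_general (n k : ℕ) (U : Set (Fin n → Fin k))
    (hU : SeqSpanSet (hamming n k) U) :
    ∃ S : Fin n → Option (Fin k),
      projDim S = 2 * (U.ncard - 1) ∧ bootClosure (hamming n k) U = projSet S := by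
  obtain ⟨m, v, hinj, rfl, hv⟩ := hU
  obtain ⟨S, hdim, hS⟩ := hv.exists_bootClosure_prefix_eq_projSet le_rfl
  rw [show {j : Fin (m + 1) | (j : ℕ) < m + 1} = Set.univ from Set.eq_univ_of_forall Fin.isLt,
    Set.image_univ] at hS
  refine ⟨S, ?_, hS⟩
  rw [Set.ncard_range_of_injective hinj, Nat.card_eq_fintype_card, Fintype.card_fin, hdim,
    Nat.add_sub_cancel]

theorem stmt5 (n k : ℕ) (hk : 2 ≤ k) (U : Set (Fin n → Fin k))
    (hU : SeqSpanSet (hamming n k) U) :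
    ∃ S : Fin n → Option (Fin k),
      projDim S = 2 * (U.ncard - 1) ∧ bootClosure (hamming n k) U = projSet S :=
  stmt5_general n k U hU
end

section
/- Let 2 ≤ k ≤ 2^{√n}, p ≤ p_* := n^{-2} k^{-2√n+1}, and D := ⌊2√n⌋ − 2. Then C(n,D) · k^{n−D+1/2} · Φ(D) → 0 as n → ∞, uniformly over all such k and p, where C(n,D) is the binomial coefficient. -/
open scoped Classical

/-! With `s = √n` and `D = ⌊2s⌋ - 2 ∈ [2s - 3, 2s - 2]`, the constants `Ψ_m` stay bounded
(the factors `1 + k^{-(m-11)/2}` have a summable product and `(1 + 4/n)^m ≤ e^8` for `m ≤ 2n`).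
Using `C(n,D) D! ≤ n^D`, `k - 1 ≤ k` and `p ≤ p_*`, the power of `n` collapses to `n^{-2}`, and
the power of `k` is `(s - D/2)² + D + 3/2 - 2s = 1/2 + θ²/4 ≤ 3/4` where `D = 2s - 2 - θ`.
Finally `2^{-D/2} k^{3/4} ≤ 2^{3/2 - s/4} ≤ 2^{3/2}` because `k ≤ 2^s`, leaving `O(n^{-2})`. -/

open Real Filter Topology

lemma Psi_nonneg (n k m : ℕ) : 0 ≤ Psi n k m := by
  induction m with
  | zero => norm_num [Psi]
  | succ m ih => rw [Psi]; split <;> positivity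

lemma Psi_le_sixteen (n k : ℕ) {m : ℕ} (hm : m ≤ 14) : Psi n k m ≤ 16 := by
  rcases m with _ | m
  · norm_num [Psi]
  rw [Psi, if_pos hm]
  have hsqrt : √2 ≤ 1.42 := by nlinarith [sq_sqrt (zero_le_two : (0 : ℝ) ≤ 2), sqrt_nonneg 2]
  calc (1 / 2 : ℝ) * (9 * √2 / 10) ^ (m + 1) ≤ 1 / 2 * 1.278 ^ (m + 1) := by gcongr; linarith
    _ ≤ 1 / 2 * 1.278 ^ 14 := by gcongr; norm_num
    _ ≤ 16 := by norm_num

lemma natCast_rpow_neg_le {k : ℕ} (hk : 2 ≤ k) {j : ℕ} (hj : 11 ≤ j) :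
    (k : ℝ) ^ (-((j : ℝ) - 11) / 2) ≤ 64 * (3 / 4) ^ j := by
  have hj' : (11 : ℝ) ≤ j := by exact_mod_cast hj
  have hbase : (2 : ℝ) ^ (-(1 / 2 : ℝ)) ≤ 3 / 4 := by
    refine le_of_pow_le_pow_left₀ two_ne_zero (by norm_num) ?_
    rw [← rpow_natCast, ← rpow_mul zero_le_two]
    norm_num
  calc (k : ℝ) ^ (-((j : ℝ) - 11) / 2) ≤ 2 ^ (-((j : ℝ) - 11) / 2) :=
        rpow_le_rpow_of_nonpos two_pos (by exact_mod_cast hk) (by linarith)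
    _ = 2 ^ (11 / 2 : ℝ) * (2 ^ (-(1 / 2 : ℝ))) ^ j := by
        rw [← rpow_natCast, ← rpow_mul zero_le_two, ← rpow_add two_pos]
        ring_nf
    _ ≤ 2 ^ (6 : ℝ) * (3 / 4) ^ j := by
        gcongr
        · norm_num
        · norm_num
    _ = 64 * (3 / 4) ^ j := by norm_num

lemma Psi_succ_le (n : ℕ) {k m : ℕ} (hk : 2 ≤ k) (hm : 14 ≤ m) :
    Psi n k (m + 1) ≤ Psi n k m * exp (64 * (3 / 4) ^ (m + 1) + 4 / n) := by
  rw [Psi, if_neg (by omega), exp_add, mul_assoc]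
  have hstep := natCast_rpow_neg_le hk (j := m + 1) (by omega)
  push_cast at hstep
  refine mul_le_mul_of_nonneg_left (mul_le_mul ?_ ?_ (by positivity) (by positivity))
    (Psi_nonneg n k m)
  · linarith [add_one_le_exp (64 * (3 / 4 : ℝ) ^ (m + 1))]
  · linarith [add_one_le_exp (4 / n : ℝ)]

lemma Psi_le_exp (n : ℕ) {k : ℕ} (hk : 2 ≤ k) (m : ℕ) :
    Psi n k m ≤ 16 * exp (64 * ∑ j ∈ Finset.range (m + 1), (3 / 4 : ℝ) ^ j + 4 * m / n) := by
  have h16 (m : ℕ) (hm : m ≤ 14) : Psi n k m ≤ 16 * exp (64 * ∑ j ∈ Finset.range (m + 1),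
      (3 / 4 : ℝ) ^ j + 4 * m / n) :=
    (Psi_le_sixteen n k hm).trans
      (le_mul_of_one_le_right (by norm_num) (one_le_exp (by positivity)))
  induction m with
  | zero => exact h16 0 (by norm_num)
  | succ m ih =>
    by_cases hm : m + 1 ≤ 14
    · exact h16 (m + 1) hm
    calc Psi n k (m + 1)
        ≤ 16 * exp (64 * ∑ j ∈ Finset.range (m + 1), (3 / 4 : ℝ) ^ j + 4 * m / n) *
          exp (64 * (3 / 4) ^ (m + 1) + 4 / n) :=
          (Psi_succ_le n hk (by omega)).trans (by gcongr)
      _ = _ := by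
        rw [mul_assoc, ← exp_add, Finset.sum_range_succ _ (m + 1)]
        push_cast
        ring_nf

lemma Psi_le (n : ℕ) {k m : ℕ} (hk : 2 ≤ k) (hm : m ≤ 2 * n) :
    Psi n k m ≤ 16 * exp 264 := by
  have hgeom : ∑ j ∈ Finset.range (m + 1), (3 / 4 : ℝ) ^ j ≤ 4 := by
    have := geom_sum_Ico_le_of_lt_one (x := (3 / 4 : ℝ)) (m := 0) (n := m + 1)
      (by norm_num) (by norm_num)
    norm_num [← Finset.range_eq_Ico] at this
    exact this
  have hlin : 4 * (m : ℝ) / n ≤ 8 := by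
    have : 4 * m ≤ 8 * n := by omega
    exact div_le_of_le_mul₀ (by positivity) (by norm_num) (by exact_mod_cast this)
  exact (Psi_le_exp n hk m).trans (by gcongr; linarith)

lemma Phi_le {n k m : ℕ} {p q C : ℝ} (hk : 1 ≤ k) (hp : 0 ≤ p) (hpq : p ≤ q)
    (hΨ : Psi n k m ≤ C) :
    Phi n k p m ≤ C * q ^ ((m : ℝ) / 2 + 1) * m.factorial * 2 ^ (-(m : ℝ) / 2) * (k : ℝ) ^ m *
      (k : ℝ) ^ (((m : ℝ) ^ 2 + 2 * m) / 4) := by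
  have hk' : (1 : ℝ) ≤ k := by exact_mod_cast hk
  have hC : 0 ≤ C := (Psi_nonneg n k m).trans hΨ
  have hq : 0 ≤ q := hp.trans hpq
  unfold Phi
  gcongr
  linarith

lemma pStar_rpow (n k : ℕ) (x : ℝ) :
    pStar n k ^ x = (n : ℝ) ^ (-2 * x) * (k : ℝ) ^ ((-2 * √n + 1) * x) := by
  rw [pStar, mul_rpow (by positivity) (by positivity), ← rpow_mul (by positivity),
    ← rpow_mul (by positivity)]

lemma two_rpow_mul_rpow_le {x s D : ℝ} (hx : 0 ≤ x) (hxs : x ≤ 2 ^ s) (hs : 0 ≤ s)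
    (hD : 2 * s - 3 ≤ D) :
    (2 : ℝ) ^ (-D / 2) * x ^ (3 / 4 : ℝ) ≤ 2 ^ (3 / 2 : ℝ) :=
  calc (2 : ℝ) ^ (-D / 2) * x ^ (3 / 4 : ℝ) ≤ 2 ^ (-D / 2) * (2 ^ s) ^ (3 / 4 : ℝ) := by gcongr
    _ = 2 ^ (-D / 2 + s * (3 / 4)) := by rw [← rpow_mul zero_le_two, rpow_add two_pos]
    _ ≤ 2 ^ (3 / 2 : ℝ) := rpow_le_rpow_of_exponent_le one_le_two (by linarith)

lemma floor_two_sqrt_sub_two_mem {n : ℕ} (hn : 1 ≤ n) :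
    2 * √n - 3 ≤ ((⌊2 * √n⌋₊ - 2 : ℕ) : ℝ) ∧ ((⌊2 * √n⌋₊ - 2 : ℕ) : ℝ) ≤ 2 * √n - 2 := by
  have hs : 1 ≤ √(n : ℝ) := one_le_sqrt.mpr (by exact_mod_cast hn)
  have h2 : 2 ≤ ⌊2 * √(n : ℝ)⌋₊ := Nat.le_floor (by push_cast; linarith)
  rw [Nat.cast_sub h2, Nat.cast_ofNat]
  constructor
  · linarith [Nat.lt_floor_add_one (2 * √(n : ℝ))]
  · linarith [Nat.floor_le (by positivity : 0 ≤ 2 * √(n : ℝ))]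

theorem choose_mul_rpow_mul_Phi_le {n k D : ℕ} {p : ℝ} (hk : 2 ≤ k) (hks : (k : ℝ) ≤ 2 ^ √n)
    (hp : 0 < p) (hps : p ≤ pStar n k) (hD₁ : 2 * √n - 3 ≤ D) (hD₂ : D ≤ 2 * √n - 2) :
    (n.choose D : ℝ) * (k : ℝ) ^ ((n : ℝ) - D + 1 / 2) * Phi n k p D ≤
      16 * exp 264 * 2 ^ (3 / 2 : ℝ) * (n : ℝ) ^ (-2 : ℝ) := by
  set s := √(n : ℝ)
  have hs1 : 1 ≤ s := by linarith [(D.cast_nonneg : (0 : ℝ) ≤ D)]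
  have hn : (1 : ℝ) ≤ n := one_le_sqrt.mp hs1
  have hsn : s ^ 2 = n := sq_sqrt (by positivity)
  have hk0 : (0 : ℝ) < k := by positivity
  have hDn : D ≤ 2 * n := by
    have : (D : ℝ) ≤ 2 * n := by nlinarith
    exact_mod_cast this
  have hchoose : (n.choose D : ℝ) * D.factorial ≤ (n : ℝ) ^ (D : ℝ) := by
    rw [rpow_natCast, ← le_div_iff₀ (by positivity)]
    exact Nat.choose_le_pow_div D n
  have hE : ((n : ℝ) - D + 1 / 2) + (-2 * s + 1) * ((D : ℝ) / 2 + 1) + D +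
      ((D : ℝ) ^ 2 + 2 * D) / 4 ≤ 3 / 4 := by
    rw [← hsn]
    nlinarith [mul_nonneg (by linarith : (0 : ℝ) ≤ 2 * s - 2 - D)
      (by linarith : (0 : ℝ) ≤ D - (2 * s - 3))]
  calc (n.choose D : ℝ) * (k : ℝ) ^ ((n : ℝ) - D + 1 / 2) * Phi n k p D
      ≤ (n.choose D : ℝ) * (k : ℝ) ^ ((n : ℝ) - D + 1 / 2) *
        (16 * exp 264 * pStar n k ^ ((D : ℝ) / 2 + 1) * D.factorial * 2 ^ (-(D : ℝ) / 2) *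
          (k : ℝ) ^ D * (k : ℝ) ^ (((D : ℝ) ^ 2 + 2 * D) / 4)) := by
        gcongr
        exact Phi_le (by omega) hp.le hps (Psi_le n hk hDn)
    _ = 16 * exp 264 * ((n.choose D : ℝ) * D.factorial) * (n : ℝ) ^ (-2 * ((D : ℝ) / 2 + 1)) *
        (2 ^ (-(D : ℝ) / 2) * (k : ℝ) ^ (((n : ℝ) - D + 1 / 2) +
          (-2 * s + 1) * ((D : ℝ) / 2 + 1) + D + ((D : ℝ) ^ 2 + 2 * D) / 4)) := by
        rw [pStar_rpow, ← rpow_natCast (k : ℝ) D]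
        simp only [rpow_add hk0]
        ring
    _ ≤ 16 * exp 264 * (n : ℝ) ^ (D : ℝ) * (n : ℝ) ^ (-2 * ((D : ℝ) / 2 + 1)) *
        (2 ^ (-(D : ℝ) / 2) * (k : ℝ) ^ (3 / 4 : ℝ)) := by
        gcongr
        exact_mod_cast (by omega : 1 ≤ k)
    _ ≤ 16 * exp 264 * (n : ℝ) ^ (D : ℝ) * (n : ℝ) ^ (-2 * ((D : ℝ) / 2 + 1)) *
        2 ^ (3 / 2 : ℝ) := by
        gcongr
        exact two_rpow_mul_rpow_le hk0.le hks (by positivity) hD₁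
    _ = 16 * exp 264 * 2 ^ (3 / 2 : ℝ) * (n : ℝ) ^ (-2 : ℝ) := by
        rw [mul_assoc _ ((n : ℝ) ^ (D : ℝ)), ← rpow_add (by positivity)]
        ring_nf

theorem stmt14 :
    ∀ ε : ℝ, 0 < ε → ∃ N : ℕ, ∀ n : ℕ, N ≤ n → ∀ k : ℕ, 2 ≤ k →
      (k : ℝ) ≤ (2 : ℝ) ^ Real.sqrt n → ∀ p : ℝ, 0 < p → p ≤ pStar n k →
        (Nat.choose n (⌊2 * Real.sqrt n⌋₊ - 2) : ℝ) *
            (k : ℝ) ^ ((n : ℝ) - ((⌊2 * Real.sqrt n⌋₊ - 2 : ℕ) : ℝ) + 1 / 2) *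
            Phi n k p (⌊2 * Real.sqrt n⌋₊ - 2) ≤ ε := by
  intro ε hε
  have hlim : Tendsto (fun n : ℕ => 16 * exp 264 * 2 ^ (3 / 2 : ℝ) * (n : ℝ) ^ (-2 : ℝ))
      atTop (𝓝 0) := by
    simpa using ((tendsto_rpow_neg_atTop two_pos).comp tendsto_natCast_atTop_atTop).const_mul
      (16 * exp 264 * 2 ^ (3 / 2 : ℝ))
  obtain ⟨N, hN⟩ :=
    eventually_atTop.mp ((hlim.eventually (ge_mem_nhds hε)).and (eventually_ge_atTop 1))
  refine ⟨N, fun n hn k hk hks p hp hps => ?_⟩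
  obtain ⟨hε', hn1⟩ := hN n hn
  obtain ⟨hD₁, hD₂⟩ := floor_two_sqrt_sub_two_mem hn1
  exact (choose_mul_rpow_mul_Phi_le hk hks hp hps hD₁ hD₂).trans hε'
end
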